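/- If b ∈ (0,1) and b ≠ 1/2, then there exists A > 0 such that for every a > A the topological entropy of the continuous map f_{a,b} : [0,1] → [0,1] is strictly positive. -/

import Mathlib

/-!
Fix `b < 1/2` (the case `b > 1/2` follows by conjugating with `x ↦ 1 - x`, which turns
`f_{a,b}` into `f_{a,1-b}`). For a small `ε` and large `a`, the map has a two-interval horseshoe:
`J = [δ, ε]` near `0` and `I = [p, q]` around the fixed point `b`, with `f p = 1 - ε`, `f q = δ`,
`f δ < ε` and `f ε > 1 - ε`; so `f` stretches `I` across `I ∪ J` and `J` across `I`. Then `f²`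
maps each of `I`, `J` over both, so each of the `2ⁿ` itineraries of `f²` is realised by an orbit,
and distinct itineraries give orbits separated by `dist(I, J)` at some time below `2n`: the
entropy is at least `log 2 / 2`.
-/

open Set Function Filter Dynamics ExpGrowth
open scoped ENNReal

section Horseshoe

variable {X ι : Type*}

lemma exists_iterate_mem_of_subset_image {g : X → X} {S : ι → Set X}
    (hS : ∀ i, (S i).Nonempty) (hcover : ∀ i j, S j ⊆ g '' S i) (n : ℕ) (w : ℕ → ι) :
    ∃ x, ∀ k ≤ n, g^[k] x ∈ S (w k) := by
  induction n generalizing w with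
  | zero => exact (hS (w 0)).imp fun x hx k hk => by rwa [Nat.le_zero.1 hk]
  | succ n ih =>
    obtain ⟨y, hy⟩ := ih (fun k => w (k + 1))
    obtain ⟨x, hx, rfl⟩ := hcover (w 0) (w 1) (hy 0 n.zero_le)
    refine ⟨x, fun k hk => ?_⟩
    cases k with
    | zero => exact hx
    | succ k => exact hy k (by omega)

variable [PseudoMetricSpace X]

lemma disjoint_ball_dynEntourage_of_le_dist {f : X → X} {γ : ℝ} {n k : ℕ} (hk : k < n)
    {x y : X} (hxy : γ ≤ dist (f^[k] x) (f^[k] y)) :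
    Disjoint (UniformSpace.ball x (dynEntourage f {q | dist q.1 q.2 < γ / 2} n))
      (UniformSpace.ball y (dynEntourage f {q | dist q.1 q.2 < γ / 2} n)) := by
  refine Set.disjoint_left.2 fun z hzx hzy => ?_
  have hx := mem_ball_dynEntourage.1 hzx k hk
  have hy := mem_ball_dynEntourage.1 hzy k hk
  simp only [UniformSpace.ball, mem_preimage, mem_ofPred_eq] at hx hy
  linarith [dist_triangle_right (f^[k] x) (f^[k] y) (f^[k] z)]

lemma pow_card_le_netMaxcard [Fintype ι] [Nonempty ι] {f : X → X} {F : Set X} {S : ι → Set X}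
    {p : ℕ} {γ : ℝ} (hp : 0 < p) (hγ : 0 < γ) (hSF : ∀ i, S i ⊆ F)
    (hS : ∀ i, (S i).Nonempty) (hcover : ∀ i j, S j ⊆ f^[p] '' S i)
    (hsep : ∀ i j, i ≠ j → ∀ x ∈ S i, ∀ y ∈ S j, γ ≤ dist x y) (n : ℕ) :
    (Fintype.card ι : ℕ∞) ^ n ≤ netMaxcard f F {q | dist q.1 q.2 < γ / 2} (p * n) := by
  classical
  have hword (m : Fin n → ι) : ∃ x ∈ F, ∀ j : Fin n, f^[p * j] x ∈ S (m j) := by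
    obtain ⟨x, hx⟩ := exists_iterate_mem_of_subset_image hS hcover n
      (fun k => if h : k < n then m ⟨k, h⟩ else Classical.arbitrary ι)
    exact ⟨x, hSF _ (hx 0 n.zero_le), fun j => by simpa [iterate_mul] using hx j j.2.le⟩
  choose x hxF hx using hword
  have hsep' {m m' : Fin n → ι} (h : m ≠ m') :
      ∃ k < p * n, γ ≤ dist (f^[k] (x m)) (f^[k] (x m')) := by
    obtain ⟨j, hj⟩ := Function.ne_iff.1 h
    exact ⟨p * j, Nat.mul_lt_mul_of_pos_left j.2 hp, hsep _ _ hj _ (hx m j) _ (hx m' j)⟩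
  have hinj : Injective x := fun m m' h => by
    by_contra hne
    obtain ⟨k, -, hk⟩ := hsep' hne
    rw [h, dist_self] at hk
    linarith
  have hnet : IsDynNetIn f F {q | dist q.1 q.2 < γ / 2} (p * n) (Finset.univ.image x : Set X) := by
    refine ⟨?_, ?_⟩
    · simpa [Set.range_subset_iff] using hxF
    · simp only [Finset.coe_image, Finset.coe_univ, image_univ]
      rintro _ ⟨m, rfl⟩ _ ⟨m', rfl⟩ hne
      obtain ⟨k, hk, hγk⟩ := hsep' (ne_of_apply_ne x hne)
      exact disjoint_ball_dynEntourage_of_le_dist hk hγk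
  simpa [Finset.card_image_of_injective _ hinj] using hnet.card_le_netMaxcard

lemma log_card_le_mul_coverEntropy [Fintype ι] [Nonempty ι] {f : X → X} {F : Set X}
    {S : ι → Set X} {p : ℕ} {γ : ℝ} (hp : 0 < p) (hγ : 0 < γ) (hSF : ∀ i, S i ⊆ F)
    (hS : ∀ i, (S i).Nonempty) (hcover : ∀ i j, S j ⊆ f^[p] '' S i)
    (hsep : ∀ i j, i ≠ j → ∀ x ∈ S i, ∀ y ∈ S j, γ ≤ dist x y) :
    ENNReal.log (Fintype.card ι) ≤ p * coverEntropy f F := by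
  set U : SetRel X X := {q | dist q.1 q.2 < γ / 2}
  have hmono : Monotone fun n => (netMaxcard f F U n : ℝ≥0∞) :=
    fun m n hmn => ENat.toENNReal_mono (netMaxcard_monotone_time f F U hmn)
  calc ENNReal.log (Fintype.card ι)
      = expGrowthSup fun n => ((Fintype.card ι : ℕ∞) : ℝ≥0∞) ^ n := by
        rw [expGrowthSup_pow]; rfl
    _ ≤ expGrowthSup fun n => (netMaxcard f F U (p * n) : ℝ≥0∞) :=
        expGrowthSup_monotone fun n => by
          simpa only [← ENat.toENNReal_pow] using
            ENat.toENNReal_mono (pow_card_le_netMaxcard hp hγ hSF hS hcover hsep n)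
    _ = p * netEntropyEntourage f F U := hmono.expGrowthSup_comp_mul hp.ne'
    _ ≤ p * coverEntropy f F := by
        gcongr
        exact netEntropyEntourage_le_coverEntropy f F
          (Metric.dist_mem_uniformity (by positivity))

lemma coverEntropy_pos_of_horseshoe {f : X → X} {F I J : Set X} {γ : ℝ} (hγ : 0 < γ)
    (hIF : I ⊆ F) (hJF : J ⊆ F) (hI : I.Nonempty) (hJ : J.Nonempty)
    (hsep : ∀ x ∈ I, ∀ y ∈ J, γ ≤ dist x y)
    (hII : I ⊆ f '' I) (hJI : J ⊆ f '' I) (hIJ : I ⊆ f '' J) :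
    0 < coverEntropy f F := by
  have hcover : ∀ i j : Bool, cond j I J ⊆ f^[2] '' cond i I J := by
    have hsq (A : Set X) : f^[2] '' A = f '' (f '' A) := by rw [← image_comp]; rfl
    rintro (_ | _) (_ | _) <;> simp only [cond, hsq]
    · exact hJI.trans (image_mono hIJ)
    · exact hII.trans (image_mono hIJ)
    · exact hJI.trans (image_mono hII)
    · exact hII.trans (image_mono hII)
  have hsep' : ∀ i j : Bool, i ≠ j → ∀ x ∈ cond i I J, ∀ y ∈ cond j I J, γ ≤ dist x y := by
    rintro (_ | _) (_ | _) h x hx y hy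
    · exact absurd rfl h
    · exact dist_comm x y ▸ hsep y hy x hx
    · exact hsep x hx y hy
    · exact absurd rfl h
  have hlog := log_card_le_mul_coverEntropy (F := F) two_pos hγ
    (by rintro (_ | _) <;> assumption) (by rintro (_ | _) <;> assumption) hcover hsep'
  rw [Fintype.card_bool] at hlog
  have hlog2 : (0 : EReal) < ENNReal.log (2 : ℕ) := by simp
  by_contra! hnonpos
  have : ((2 : ℕ) : EReal) * coverEntropy f F ≤ (2 : ℕ) * 0 := by gcongr
  rw [mul_zero] at this
  exact (hlog2.trans_le (hlog.trans this)).false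

end Horseshoe

lemma coverEntropy_pos_of_Icc_horseshoe {f : ℝ → ℝ} {F : Set ℝ} {u₁ u₂ u₃ u₄ : ℝ}
    (h₁₂ : u₁ ≤ u₂) (h₂₃ : u₂ < u₃) (h₃₄ : u₃ ≤ u₄) (hF : Icc u₁ u₄ ⊆ F)
    (hf : ContinuousOn f (Icc u₁ u₄))
    (hfu₁ : f u₁ ≤ u₃) (hfu₂ : u₄ ≤ f u₂) (hfu₃ : u₄ ≤ f u₃) (hfu₄ : f u₄ ≤ u₁) :
    0 < coverEntropy f F := by
  have hJ : Icc u₃ u₄ ⊆ f '' Icc u₁ u₂ := (Icc_subset_Icc hfu₁ hfu₂).trans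
    (intermediate_value_Icc h₁₂ (hf.mono (Icc_subset_Icc_right (by linarith))))
  have hI : Icc u₁ u₄ ⊆ f '' Icc u₃ u₄ := (Icc_subset_Icc hfu₄ hfu₃).trans
    (intermediate_value_Icc' h₃₄ (hf.mono (Icc_subset_Icc_left (by linarith))))
  refine coverEntropy_pos_of_horseshoe (I := Icc u₃ u₄) (J := Icc u₁ u₂) (sub_pos.2 h₂₃)
    ((Icc_subset_Icc_left (by linarith)).trans hF) ((Icc_subset_Icc_right (by linarith)).trans hF)
    (nonempty_Icc.2 h₃₄) (nonempty_Icc.2 h₁₂) (fun x hx y hy => ?_)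
    ((Icc_subset_Icc_left (by linarith)).trans hI) ((Icc_subset_Icc_right (by linarith)).trans hI)
    hJ
  rw [Real.dist_eq]
  exact (sub_le_sub hx.1 hy.2).trans (le_abs_self _)

lemma StrictMono.continuous_of_isOpen_range {α β : Type*} [LinearOrder α] [TopologicalSpace α]
    [OrderTopology α] [LinearOrder β] [TopologicalSpace β] [OrderTopology β] [DenselyOrdered β]
    {g : α → β} (hg : StrictMono g) (hr : IsOpen (range g)) : Continuous g :=
  continuous_iff_continuousAt.2 fun x => (hg.strictMonoOn univ).continuousAt_of_image_mem_nhds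
    univ_mem (by rw [image_univ]; exact hr.mem_nhds (mem_range_self x))

lemma StrictAnti.continuous_of_isOpen_range {α β : Type*} [LinearOrder α] [TopologicalSpace α]
    [OrderTopology α] [LinearOrder β] [TopologicalSpace β] [OrderTopology β] [DenselyOrdered β]
    {g : α → β} (hg : StrictAnti g) (hr : IsOpen (range g)) : Continuous g :=
  continuous_ofDual.comp (hg.dual_right.continuous_of_isOpen_range hr)

lemma StrictAntiOn.strictAnti_of_leftInverse {α β : Type*} [LinearOrder α] [Preorder β]
    {φ : α → β} {g : β → α} {s : Set α} (hφ : StrictAntiOn φ s) (hg : ∀ y, g y ∈ s)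
    (hinv : LeftInverse φ g) : StrictAnti g := fun y₁ y₂ h =>
  (hφ.lt_iff_gt (hg y₁) (hg y₂)).1 (by rwa [hinv, hinv])

section FoReL

variable {Ψ Ψinv : ℝ → ℝ}

lemma inv_neg_eq_one_sub (hΨsym : ∀ x ∈ Ioo (0:ℝ) 1, Ψ (1 - x) = -Ψ x)
    (hinv1 : ∀ x ∈ Ioo (0:ℝ) 1, Ψinv (Ψ x) = x)
    (hinv2 : ∀ y : ℝ, Ψinv y ∈ Ioo (0:ℝ) 1 ∧ Ψ (Ψinv y) = y) (y : ℝ) :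
    Ψinv (-y) = 1 - Ψinv y := by
  obtain ⟨⟨h0, h1⟩, hy⟩ := hinv2 y
  rw [← hinv1 (1 - Ψinv y) ⟨by linarith, by linarith⟩, hΨsym _ ⟨h0, h1⟩, hy]

lemma foReL_one_sub (hΨsym : ∀ x ∈ Ioo (0:ℝ) 1, Ψ (1 - x) = -Ψ x)
    (hinv1 : ∀ x ∈ Ioo (0:ℝ) 1, Ψinv (Ψ x) = x)
    (hinv2 : ∀ y : ℝ, Ψinv y ∈ Ioo (0:ℝ) 1 ∧ Ψ (Ψinv y) = y) {a b : ℝ} {f : ℝ → ℝ}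
    (hf : ∀ x ∈ Ioo (0:ℝ) 1, f x = Ψinv (Ψ x + a * (x - b))) :
    ∀ x ∈ Ioo (0:ℝ) 1, 1 - f (1 - x) = Ψinv (Ψ x + a * (x - (1 - b))) := by
  intro x hx
  rw [hf _ ⟨by linarith [hx.2], by linarith [hx.1]⟩, hΨsym x hx,
    show -Ψ x + a * (1 - x - b) = -(Ψ x + a * (x - (1 - b))) by ring,
    inv_neg_eq_one_sub hΨsym hinv1 hinv2, sub_sub_cancel]

lemma coverEntropy_one_sub_conj_le (f : ℝ → ℝ) :
    coverEntropy (fun x => 1 - f (1 - x)) (Icc 0 1) ≤ coverEntropy f (Icc 0 1) := by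
  have hconj : Semiconj (fun x : ℝ => 1 - x) f (fun x => 1 - f (1 - x)) := fun x => by simp
  simpa using coverEntropy_image_le_of_uniformContinuous hconj
    (uniformContinuous_const.sub uniformContinuous_id) (Icc 0 1)

lemma coverEntropy_foReL_pos (hΨcont : ContinuousOn Ψ (Ioo 0 1))
    (hΨanti : StrictAntiOn Ψ (Ioo 0 1)) (hΨsym : ∀ x ∈ Ioo (0:ℝ) 1, Ψ (1 - x) = -Ψ x)
    (hinv1 : ∀ x ∈ Ioo (0:ℝ) 1, Ψinv (Ψ x) = x)
    (hinv2 : ∀ y : ℝ, Ψinv y ∈ Ioo (0:ℝ) 1 ∧ Ψ (Ψinv y) = y) (hΨinv : Continuous Ψinv)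
    {a b ε : ℝ} (ha : 0 < a) (hε : 0 < ε) (hεb : ε < b) (hb : b < 1 - ε)
    (ha₁ : 2 * Ψ ε < a * (b - ε)) (ha₂ : 2 * Ψ ε < a * (1 - 2 * b - ε)) {f : ℝ → ℝ}
    (hf : ∀ x ∈ Ioo (0:ℝ) 1, f x = Ψinv (Ψ x + a * (x - b))) :
    0 < coverEntropy f (Icc 0 1) := by
  have lt_inv_iff {y : ℝ} (hy : y ∈ Ioo (0:ℝ) 1) (v : ℝ) : y < Ψinv v ↔ v < Ψ y := by
    rw [← hΨanti.lt_iff_gt (hinv2 v).1 hy, (hinv2 v).2]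
  have inv_lt_iff {y : ℝ} (hy : y ∈ Ioo (0:ℝ) 1) (v : ℝ) : Ψinv v < y ↔ Ψ y < v := by
    rw [← hΨanti.lt_iff_gt hy (hinv2 v).1, (hinv2 v).2]
  have hεI : ε ∈ Ioo (0:ℝ) 1 := ⟨hε, by linarith⟩
  have hε'I : 1 - ε ∈ Ioo (0:ℝ) 1 := ⟨by linarith, by linarith⟩
  have hfcont : ContinuousOn f (Ioo 0 1) :=
    (hΨinv.comp_continuousOn (hΨcont.add (by fun_prop))).congr hf
  have hfb : f b = b := by
    have hbI : b ∈ Ioo (0:ℝ) 1 := ⟨by linarith, by linarith⟩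
    rw [hf b hbI, sub_self, mul_zero, add_zero, hinv1 b hbI]
  -- `δ` is chosen so that `Ψ (f δ) = Ψ ε + a δ`.
  set δ := Ψinv (Ψ ε + a * b)
  have hδI : δ ∈ Ioo (0:ℝ) 1 := (hinv2 _).1
  have hδ : Ψ δ = Ψ ε + a * b := (hinv2 _).2
  have hδε : δ < ε := (inv_lt_iff hεI _).2 (by nlinarith)
  have hfε : 1 - ε < f ε := by
    rw [hf ε hεI, lt_inv_iff hε'I, hΨsym ε hεI]
    linarith
  have hf1ε : f (1 - ε) < δ := by
    rw [hf _ hε'I, inv_lt_iff hδI, hδ, hΨsym ε hεI]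
    linarith
  have hfδ : f δ < ε := by
    rw [hf δ hδI, inv_lt_iff hεI, hδ]
    nlinarith [hδI.1]
  obtain ⟨p, ⟨hεp, hpb⟩, hfp⟩ : ∃ p ∈ Ioo ε b, f p = 1 - ε :=
    intermediate_value_Ioo' hεb.le (hfcont.mono (Icc_subset_Ioo hε (by linarith)))
      ⟨by rw [hfb]; linarith, hfε⟩
  obtain ⟨q, ⟨hbq, hq⟩, hfq⟩ : ∃ q ∈ Ioo b (1 - ε), f q = δ :=
    intermediate_value_Ioo' hb.le (hfcont.mono (Icc_subset_Ioo (by linarith) hε'I.2))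
      ⟨hf1ε, by rw [hfb]; linarith⟩
  exact coverEntropy_pos_of_Icc_horseshoe hδε.le hεp (by linarith)
    (Icc_subset_Icc hδI.1.le (by linarith)) (hfcont.mono (Icc_subset_Ioo hδI.1 (by linarith)))
    (by linarith) (by linarith) (by linarith) hfq.le

end FoReL

theorem stmt16_general
    (Ψ Ψinv : ℝ → ℝ)
    (hΨcont : ContinuousOn Ψ (Set.Ioo 0 1))
    (hΨanti : StrictAntiOn Ψ (Set.Ioo 0 1))
    (hΨsym : ∀ x ∈ Set.Ioo (0:ℝ) 1, Ψ (1 - x) = -Ψ x)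
    (hinv1 : ∀ x ∈ Set.Ioo (0:ℝ) 1, Ψinv (Ψ x) = x)
    (hinv2 : ∀ y : ℝ, Ψinv y ∈ Set.Ioo (0:ℝ) 1 ∧ Ψ (Ψinv y) = y)
    (b : ℝ) (hb : b ∈ Set.Ioo (0:ℝ) 1) (hbne : b ≠ 1/2) :
    ∃ A > (0:ℝ), ∀ a > A, ∀ f : ℝ → ℝ, f 0 = 0 → f 1 = 1 →
      (∀ x ∈ Set.Ioo (0:ℝ) 1, f x = Ψinv (Ψ x + a * (x - b))) →
      0 < Dynamics.coverEntropy f (Set.Icc (0:ℝ) 1) := by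
  wlog hb₂ : b < 1 / 2 generalizing b
  · obtain ⟨A, hA, hpos⟩ := this (1 - b) ⟨by linarith [hb.2], by linarith [hb.1]⟩
      (by contrapose! hbne; linarith) (by contrapose! hbne; linarith)
    refine ⟨A, hA, fun a ha f hf0 hf1 hf => ?_⟩
    exact (hpos a ha _ (by simp [hf1]) (by simp [hf0])
      (foReL_one_sub hΨsym hinv1 hinv2 hf)).trans_le (coverEntropy_one_sub_conj_le f)
  have hΨinv : Continuous Ψinv := by
    refine (hΨanti.strictAnti_of_leftInverse (fun y => (hinv2 y).1) fun y => (hinv2 y).2)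
      |>.continuous_of_isOpen_range ?_
    rw [Subset.antisymm (range_subset_iff.2 fun y => (hinv2 y).1)
      fun x hx => ⟨Ψ x, hinv1 x hx⟩]
    exact isOpen_Ioo
  set ε := b * (1 - 2 * b)
  have hlarge :
      ∀ᶠ a in atTop, 0 < a ∧ 2 * Ψ ε < a * (b - ε) ∧ 2 * Ψ ε < a * (1 - 2 * b - ε) :=
    (eventually_gt_atTop 0).and <|
      ((tendsto_id.atTop_mul_const (by nlinarith [hb.1])).eventually_gt_atTop _).and
      ((tendsto_id.atTop_mul_const (by nlinarith [hb.1])).eventually_gt_atTop _)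
  obtain ⟨N, hN⟩ := eventually_atTop.1 hlarge
  refine ⟨max N 1, by positivity, fun a ha f _ _ hf => ?_⟩
  obtain ⟨ha, ha₁, ha₂⟩ := hN a ((le_max_left _ _).trans ha.le)
  exact coverEntropy_foReL_pos hΨcont hΨanti hΨsym hinv1 hinv2 hΨinv ha
    (by nlinarith [hb.1]) (by nlinarith [hb.1]) (by nlinarith [hb.1]) ha₁ ha₂ hf

theorem stmt16
    (Ψ Ψinv : ℝ → ℝ)
    (hΨcont : ContinuousOn Ψ (Set.Ioo 0 1))
    (hΨanti : StrictAntiOn Ψ (Set.Ioo 0 1))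
    (hΨbij : Set.BijOn Ψ (Set.Ioo 0 1) Set.univ)
    (hΨsym : ∀ x ∈ Set.Ioo (0:ℝ) 1, Ψ (1 - x) = -Ψ x)
    (hinv1 : ∀ x ∈ Set.Ioo (0:ℝ) 1, Ψinv (Ψ x) = x)
    (hinv2 : ∀ y : ℝ, Ψinv y ∈ Set.Ioo (0:ℝ) 1 ∧ Ψ (Ψinv y) = y)
    (b : ℝ) (hb : b ∈ Set.Ioo (0:ℝ) 1) (hbne : b ≠ 1/2) :
    ∃ A > (0:ℝ), ∀ a > A, ∀ f : ℝ → ℝ, f 0 = 0 → f 1 = 1 →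
      (∀ x ∈ Set.Ioo (0:ℝ) 1, f x = Ψinv (Ψ x + a * (x - b))) →
      0 < Dynamics.coverEntropy f (Set.Icc (0:ℝ) 1) :=
  stmt16_general Ψ Ψinv hΨcont hΨanti hΨsym hinv1 hinv2 b hb hbne
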